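/- (Theorem 1 of the paper.) Let f : ℝ² → ℝ be measurable with Radon transform R f(θ, τ) = ∫_{s∈ℝ} f(τ cos θ − s sin θ, τ sin θ + s cos θ) ds, let h : ℝ → ℝ be a measurable kernel, and define S_h(θ, τ) = ∫_{u∈ℝ} R f(θ, τ − u) · h(u) du and the magnitude spectrum A(θ, ω) = ‖∫_{τ∈ℝ} S_h(θ, τ) · exp(−i ω τ) dτ‖. Let α ∈ ℝ, t = (Δx, Δy) ∈ ℝ², and f'(X) = f(R_α X − t) where R_α is rotation by α; let A' be the magnitude spectrum built from f' by the same construction. Then for all θ, ω ∈ ℝ, A'(θ, ω) = A(θ + α, ω): the magnitude spectrum A is rotation equivariant and translation invariant. -/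

import Mathlib

/-!
Rotating `f` by `α` turns the line of direction `θ` into the line of direction `θ + α`, and
translating it by `t` moves each line along its normal by `⟨t, (cos φ, sin φ)⟩` and along itself
by a shift absorbed by the translation invariance of `ds`. So the sinogram of `f'` at angle `θ`
is the sinogram of `f` at angle `θ + α` shifted in `τ`; the convolution in `τ` commutes with the
shift, and a shift multiplies the Fourier transform by a unimodular factor.
-/

open MeasureTheory

/-- The Radon transform of `f : ℝ² → ℝ`:
`R f (θ, τ) = ∫ s, f (τ cos θ − s sin θ, τ sin θ + s cos θ) ds`. -/
noncomputable def radon (f : ℝ × ℝ → ℝ) (θ τ : ℝ) : ℝ :=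
  ∫ s : ℝ, f (τ * Real.cos θ - s * Real.sin θ, τ * Real.sin θ + s * Real.cos θ)

/-- Rotation of ℝ² by angle `α`: `R_α (x, y) = (x cos α − y sin α, x sin α + y cos α)`. -/
noncomputable def rot (α : ℝ) (X : ℝ × ℝ) : ℝ × ℝ :=
  (X.1 * Real.cos α - X.2 * Real.sin α, X.1 * Real.sin α + X.2 * Real.cos α)

/-- Per-angle 1D convolution of the sinogram of `f` with the kernel `h` along
the `τ` variable: `S_h (θ, τ) = ∫ u, R f (θ, τ − u) · h u du`. -/
noncomputable def sinoConv (f : ℝ × ℝ → ℝ) (h : ℝ → ℝ) (θ τ : ℝ) : ℝ :=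
  ∫ u : ℝ, radon f θ (τ - u) * h u

/-- Magnitude spectrum: the modulus of the 1D Fourier transform of
`S_h (θ, ·)` in the `τ` variable, `A (θ, ω) = ‖∫ τ, S_h (θ, τ) exp (−iωτ) dτ‖`. -/
noncomputable def magSpec (f : ℝ × ℝ → ℝ) (h : ℝ → ℝ) (θ ω : ℝ) : ℝ :=
  ‖∫ τ : ℝ, (sinoConv f h θ τ : ℂ) * Complex.exp (-(Complex.I * (ω : ℂ) * (τ : ℂ)))‖

open Real

lemma rot_apply_line (α θ τ s : ℝ) :
    rot α (τ * cos θ - s * sin θ, τ * sin θ + s * cos θ)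
      = (τ * cos (θ + α) - s * sin (θ + α), τ * sin (θ + α) + s * cos (θ + α)) := by
  simp only [rot, cos_add, sin_add, Prod.mk.injEq]
  constructor <;> ring

lemma line_sub_eq_line (θ τ s : ℝ) (v : ℝ × ℝ) :
    (τ * cos θ - s * sin θ, τ * sin θ + s * cos θ) - v
      = ((τ - (v.1 * cos θ + v.2 * sin θ)) * cos θ - (s - (-v.1 * sin θ + v.2 * cos θ)) * sin θ,
         (τ - (v.1 * cos θ + v.2 * sin θ)) * sin θ + (s - (-v.1 * sin θ + v.2 * cos θ)) * cos θ) := by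
  obtain ⟨a, b⟩ := v
  simp only [Prod.mk_sub_mk, Prod.mk.injEq]
  constructor
  · linear_combination a * sin_sq_add_cos_sq θ
  · linear_combination b * sin_sq_add_cos_sq θ

lemma radon_comp_rot (f : ℝ × ℝ → ℝ) (α θ τ : ℝ) :
    radon (fun X => f (rot α X)) θ τ = radon f (θ + α) τ := by
  simp only [radon, rot_apply_line]

lemma radon_comp_sub (f : ℝ × ℝ → ℝ) (v : ℝ × ℝ) (θ τ : ℝ) :
    radon (fun X => f (X - v)) θ τ = radon f θ (τ - (v.1 * cos θ + v.2 * sin θ)) := by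
  simp only [radon, line_sub_eq_line]
  exact integral_sub_right_eq_self
    (fun s => f ((τ - (v.1 * cos θ + v.2 * sin θ)) * cos θ - s * sin θ,
      (τ - (v.1 * cos θ + v.2 * sin θ)) * sin θ + s * cos θ)) _

lemma sinoConv_eq_of_radon_eq_shift {f g : ℝ × ℝ → ℝ} {θ φ c : ℝ}
    (hfg : ∀ τ, radon g θ τ = radon f φ (τ - c)) (h : ℝ → ℝ) (τ : ℝ) :
    sinoConv g h θ τ = sinoConv f h φ (τ - c) := by
  simp only [sinoConv, hfg, sub_right_comm]

lemma norm_integral_comp_sub_mul_exp (g : ℝ → ℂ) (c ω : ℝ) :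
    ‖∫ τ : ℝ, g (τ - c) * Complex.exp (-(Complex.I * ω * τ))‖
      = ‖∫ τ : ℝ, g τ * Complex.exp (-(Complex.I * ω * τ))‖ := by
  have hshift : ∫ τ : ℝ, g (τ - c) * Complex.exp (-(Complex.I * ω * τ))
      = Complex.exp (-(Complex.I * ω * c)) * ∫ τ : ℝ, g τ * Complex.exp (-(Complex.I * ω * τ)) := by
    rw [← integral_add_right_eq_self _ c, ← integral_const_mul]
    congr 1 with τ
    rw [add_sub_cancel_right, Complex.ofReal_add, mul_add, neg_add, Complex.exp_add]
    ring
  have hunit : ‖Complex.exp (-(Complex.I * ω * c))‖ = 1 := by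
    rw [Complex.norm_exp]
    simp
  rw [hshift, norm_mul, hunit, one_mul]

theorem magSpec_rotation_equivariant_translation_invariant_general
    (f : ℝ × ℝ → ℝ) (h : ℝ → ℝ)
    (α Δx Δy θ ω : ℝ) :
    magSpec (fun X => f (rot α X - (Δx, Δy))) h θ ω = magSpec f h (θ + α) ω := by
  have hradon : ∀ τ, radon (fun X => f (rot α X - (Δx, Δy))) θ τ
      = radon f (θ + α) (τ - (Δx * cos (θ + α) + Δy * sin (θ + α))) := fun τ =>
    (radon_comp_rot (fun X => f (X - (Δx, Δy))) α θ τ).trans (radon_comp_sub f _ _ τ)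
  simp only [magSpec, sinoConv_eq_of_radon_eq_shift hradon h]
  exact norm_integral_comp_sub_mul_exp (fun τ => (sinoConv f h (θ + α) τ : ℂ)) _ ω

/-- Theorem 1 of the paper: the magnitude spectrum is rotation equivariant and
translation invariant: for `f' X = f (R_α X − t)`,
`A' (θ, ω) = A (θ + α, ω)`. -/
theorem magSpec_rotation_equivariant_translation_invariant
    (f : ℝ × ℝ → ℝ) (h : ℝ → ℝ) (hf : Measurable f) (hh : Measurable h)
    (α Δx Δy θ ω : ℝ) :
    magSpec (fun X => f (rot α X - (Δx, Δy))) h θ ω = magSpec f h (θ + α) ω :=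
  magSpec_rotation_equivariant_translation_invariant_general f h α Δx Δy θ ω
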